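/- arXiv:1805.10998 — 2 statements merged into one kernel-verified Lean document; each statement's English description precedes it below -/
import Mathlib

section
/- Let γ(k,i) be the integers defined by the stated recurrence. Then for every given integer k ≥ 1 and every n ≥ 1, LS(n+k, n) = 2^k · Σ_{i=k+2}^{3k} γ(k,i) · C(n+k+1, i), where C(·,·) is the usual binomial coefficient. -/
/-- Legendre-Stirling numbers of the second kind. -/
def LS : ℕ → ℕ → ℕ
  | 0, 0 => 1
  | 0, _ + 1 => 0
  | _ + 1, 0 => 0
  | n + 1, k + 1 => LS n k + (k + 1) * (k + 2) * LS n (k + 1)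

/-- For an integer `m`, the binomial coefficient `C(m, 2) = m(m−1)/2`. -/
def c2 (m : ℤ) : ℤ := m * (m - 1) / 2

/-- The coefficients `γ(k, i)`; note `gam 0 i = δ_{i,0}` and `gam k i = 0` for `i < 0`. -/
def gam : ℕ → ℤ → ℤ
  | 0, i => if i = 0 then 1 else 0
  | k + 1, i =>
      c2 (i - (k : ℤ) - 1) * gam k (i - 1) +
        (i - 1) * (i - (k : ℤ) - 2) * gam k (i - 2) +
        c2 (i - 1) * gam k (i - 3)

/-!
Put `G k N = ∑ᵢ γ(k, i) C(N, i)`. Pascal's rule turns `G (k+1) (N+1) - G (k+1) N` into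
`∑ᵢ γ(k+1, i+1) C(N, i)`; expanding `γ(k+1, i+1)` by its recurrence and reindexing, the identity
`2 C(j-k, 2) C(N, j) + 2 (j+1)(j-k) C(N, j+1) + 2 C(j+2, 2) C(N, j+2) = (N-k-1)(N-k) C(N, j)`
collapses twice this difference to `(N-k-1)(N-k) G k N`. At `N = n+k+2` this is exactly the
recurrence `LS(n+k+2, n+1) = LS(n+k+1, n) + (n+1)(n+2) LS(n+k+1, n+1)` divided by `2^(k+1)`, so
`LS(n+k, n) = 2^k G k (n+k+1)` by induction on `k` and `n`. Finally `γ(k, i)` vanishes unless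
`k+2 ≤ i ≤ 3k` (for `k ≥ 1`).
-/

open Finset

lemma two_mul_c2 (m : ℤ) : 2 * c2 m = m * (m - 1) :=
  Int.mul_ediv_cancel' (Int.even_mul_pred_self m).two_dvd

lemma gam_succ_add_one (k : ℕ) (i : ℤ) :
    gam (k + 1) (i + 1) =
      c2 (i - k) * gam k i + i * (i - k - 1) * gam k (i - 1) + c2 i * gam k (i - 2) := by
  rw [gam]
  ring_nf

lemma gam_eq_zero_of_lt {k : ℕ} {i : ℤ} (hi : 3 * (k : ℤ) < i) : gam k i = 0 := by
  induction k generalizing i with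
  | zero => rw [gam, if_neg (by omega)]
  | succ k ih =>
    push_cast at hi
    rw [gam, ih (by omega), ih (by omega), ih (by omega)]
    ring

lemma gam_eq_zero_of_lt_add_two {k : ℕ} (hk : 1 ≤ k) {i : ℤ} (hi : i < k + 2) :
    gam k i = 0 := by
  induction k, hk using Nat.le_induction generalizing i with
  | base =>
    simp only [gam, Nat.cast_zero]
    split_ifs <;> simp_all [c2] <;> omega
  | succ k hk ih =>
    push_cast at hi
    rw [gam, ih (by omega), ih (by omega), ih (by omega)]
    ring

lemma LS_succ_succ (n k : ℕ) : LS (n + 1) (k + 1) = LS n k + (k + 1) * (k + 2) * LS n (k + 1) :=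
  rfl

lemma LS_eq_zero_of_lt {n k : ℕ} (h : n < k) : LS n k = 0 := by
  induction n generalizing k with
  | zero => obtain ⟨k, rfl⟩ := Nat.exists_eq_add_one.mpr h; rfl
  | succ n ih =>
    obtain ⟨k, rfl⟩ := Nat.exists_eq_add_one.mpr (Nat.zero_lt_of_lt h)
    rw [LS_succ_succ, ih (by omega), ih (by omega), mul_zero, add_zero]

lemma LS_self (n : ℕ) : LS n n = 1 := by
  induction n with
  | zero => rfl
  | succ n ih => rw [LS_succ_succ, ih, LS_eq_zero_of_lt (Nat.lt_succ_self n), mul_zero, add_zero]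

lemma succ_mul_choose_succ (N j : ℕ) :
    ((j : ℤ) + 1) * N.choose (j + 1) = ((N : ℤ) - j) * N.choose j := by
  rcases le_or_gt j N with h | h
  · have := congrArg (Nat.cast : ℕ → ℤ) (Nat.choose_succ_right_eq N j)
    push_cast [Nat.cast_sub h] at this
    linarith
  · simp [Nat.choose_eq_zero_of_lt h, Nat.choose_eq_zero_of_lt (Nat.lt_succ_of_lt h)]

lemma c2_mul_choose_three_term (N k j : ℕ) :
    2 * c2 ((j : ℤ) - k) * N.choose j + 2 * ((j : ℤ) + 1) * ((j : ℤ) - k) * N.choose (j + 1) +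
        2 * c2 ((j : ℤ) + 2) * N.choose (j + 2) =
      ((N : ℤ) - k - 1) * ((N : ℤ) - k) * N.choose j := by
  have h₁ := succ_mul_choose_succ N j
  have h₂ := succ_mul_choose_succ N (j + 1)
  push_cast at h₂
  rw [two_mul_c2, two_mul_c2]
  linear_combination (2 * ((j : ℤ) - k) + ((N : ℤ) - j - 1)) * h₁ + ((j : ℤ) + 1) * h₂

lemma sum_range_shift_of_eq_zero {M : Type*} [AddCommMonoid M] {m : ℕ} {f : ℕ → M}
    (h₀ : f 0 = 0) (hm : f m = 0) : ∑ i ∈ range m, f (i + 1) = ∑ i ∈ range m, f i := by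
  have h := (sum_range_succ' f m).symm.trans (sum_range_succ f m)
  rwa [h₀, hm, add_zero, add_zero] at h

lemma sum_mul_choose_succ {R : Type*} [Semiring R] (g : ℕ → R) (M N : ℕ) :
    ∑ i ∈ range (M + 1), g i * (N + 1).choose i =
      ∑ i ∈ range (M + 1), g i * N.choose i + ∑ i ∈ range M, g (i + 1) * N.choose i := by
  rw [sum_range_succ', sum_range_succ' (fun i => g i * N.choose i)]
  simp only [Nat.choose_succ_succ', Nat.cast_add, mul_add, sum_add_distrib, Nat.choose_zero_right]
  abel

def gamBinomialSum (k N : ℕ) : ℤ := ∑ i ∈ range (3 * k + 1), gam k i * N.choose i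

lemma gamBinomialSum_eq_sum_range {k M : ℕ} (hM : 3 * k + 1 ≤ M) (N : ℕ) :
    gamBinomialSum k N = ∑ i ∈ range M, gam k i * N.choose i := by
  refine sum_subset (range_subset_range.mpr hM) fun i _ hi => ?_
  rw [gam_eq_zero_of_lt (by rw [mem_range] at hi; omega), zero_mul]

lemma two_mul_sum_gam_succ_add_one_mul_choose (k N : ℕ) :
    2 * ∑ i ∈ range (3 * k + 3), gam (k + 1) ((i : ℤ) + 1) * N.choose i =
      ((N : ℤ) - k - 1) * ((N : ℤ) - k) * gamBinomialSum k N := by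
  set m := 3 * k + 3
  have hB : ∑ i ∈ range m, 2 * (i : ℤ) * (i - k - 1) * gam k (i - 1) * N.choose i =
      ∑ j ∈ range m, 2 * ((j : ℤ) + 1) * (j - k) * gam k j * N.choose (j + 1) := by
    rw [← sum_range_shift_of_eq_zero (by simp)
      (by rw [gam_eq_zero_of_lt (by omega), mul_zero, zero_mul])]
    refine sum_congr rfl fun j _ => ?_
    push_cast
    ring_nf
  have hC : ∑ i ∈ range m, 2 * c2 i * gam k (i - 2) * N.choose i =
      ∑ j ∈ range m, 2 * c2 ((j : ℤ) + 2) * gam k j * N.choose (j + 2) := by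
    rw [← sum_range_shift_of_eq_zero (by simp [c2])
      (by rw [gam_eq_zero_of_lt (by omega), mul_zero, zero_mul]),
      ← sum_range_shift_of_eq_zero (by simp [c2])
      (by rw [gam_eq_zero_of_lt (by omega), mul_zero, zero_mul])]
    refine sum_congr rfl fun j _ => ?_
    push_cast
    ring_nf
  calc 2 * ∑ i ∈ range m, gam (k + 1) ((i : ℤ) + 1) * N.choose i
      = ∑ i ∈ range m, 2 * c2 ((i : ℤ) - k) * gam k i * N.choose i +
          ∑ i ∈ range m, 2 * (i : ℤ) * (i - k - 1) * gam k (i - 1) * N.choose i +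
          ∑ i ∈ range m, 2 * c2 i * gam k (i - 2) * N.choose i := by
        rw [mul_sum, ← sum_add_distrib, ← sum_add_distrib]
        refine sum_congr rfl fun i _ => ?_
        rw [gam_succ_add_one]
        ring
    _ = ∑ j ∈ range m, ((N : ℤ) - k - 1) * (N - k) * (gam k j * N.choose j) := by
        rw [hB, hC, ← sum_add_distrib, ← sum_add_distrib]
        refine sum_congr rfl fun j _ => ?_
        linear_combination gam k j * c2_mul_choose_three_term N k j
    _ = ((N : ℤ) - k - 1) * ((N : ℤ) - k) * gamBinomialSum k N := by
        rw [← mul_sum, gamBinomialSum_eq_sum_range (M := m) (by omega)]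

lemma two_mul_gamBinomialSum_succ_succ (k N : ℕ) :
    2 * gamBinomialSum (k + 1) (N + 1) =
      2 * gamBinomialSum (k + 1) N + ((N : ℤ) - k - 1) * ((N : ℤ) - k) * gamBinomialSum k N := by
  rw [← two_mul_sum_gam_succ_add_one_mul_choose, gamBinomialSum, gamBinomialSum,
    show 3 * (k + 1) + 1 = 3 * k + 3 + 1 by ring, sum_mul_choose_succ, mul_add]
  simp only [Nat.cast_add, Nat.cast_one]

lemma gamBinomialSum_succ_self_add_one (k : ℕ) : gamBinomialSum (k + 1) (k + 2) = 0 := by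
  refine sum_eq_zero fun i _ => ?_
  rcases le_or_gt i (k + 2) with h | h
  · rw [gam_eq_zero_of_lt_add_two (by omega) (by push_cast; omega), zero_mul]
  · rw [Nat.choose_eq_zero_of_lt h, Nat.cast_zero, mul_zero]

lemma LS_add_eq_two_pow_mul_gamBinomialSum (k n : ℕ) : (LS (n + k) n : ℤ) = 2 ^ k * gamBinomialSum k (n + k + 1) := by
  induction k generalizing n with
  | zero => simp [gamBinomialSum, LS_self, gam]
  | succ k ihk =>
    induction n with
    | zero => simp [LS, gamBinomialSum_succ_self_add_one]
    | succ n ihn =>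
      have hLS : (LS (n + 1 + (k + 1)) (n + 1) : ℤ) =
          LS (n + (k + 1)) n + ((n : ℤ) + 1) * (n + 2) * LS (n + 1 + k) (n + 1) := by
        rw [show n + 1 + (k + 1) = n + (k + 1) + 1 by omega, LS_succ_succ,
          show n + (k + 1) = n + 1 + k by omega]
        push_cast
        ring
      rw [hLS, ihn, ihk, show n + (k + 1) + 1 = n + k + 2 by omega,
        show n + 1 + k + 1 = n + k + 2 by omega, show n + 1 + (k + 1) + 1 = n + k + 2 + 1 by omega]
      have hrec := two_mul_gamBinomialSum_succ_succ k (n + k + 2)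
      push_cast at hrec
      linear_combination -2 ^ k * hrec

theorem LS_binomial_expansion_general (k : ℕ) (hk : 1 ≤ k) (n : ℕ) :
    (LS (n + k) n : ℤ) =
      2 ^ k * ∑ i ∈ Finset.Icc (k + 2) (3 * k), gam k (i : ℤ) * (Nat.choose (n + k + 1) i : ℤ) := by
  rw [LS_add_eq_two_pow_mul_gamBinomialSum, gamBinomialSum]
  congr 1
  refine (sum_subset (fun i hi => by rw [mem_Icc] at hi; rw [mem_range]; omega) fun i hi hi' => ?_).symm
  simp only [mem_Icc, mem_range, not_and, not_le] at hi hi'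
  rw [gam_eq_zero_of_lt_add_two hk (by omega), zero_mul]

theorem LS_binomial_expansion (k : ℕ) (hk : 1 ≤ k) (n : ℕ) (hn : 1 ≤ n) :
    (LS (n + k) n : ℤ) =
      2 ^ k * ∑ i ∈ Finset.Icc (k + 2) (3 * k), gam k (i : ℤ) * (Nat.choose (n + k + 1) i : ℤ) :=
  LS_binomial_expansion_general k hk n
end

section
/- For every k ≥ 1, Σ_i γ(k,i)·(−1)^i = (−1)^k · (k+1)! · k! / 2^k; that is, the value of the polynomial γ_k(x) = Σ_i γ(k,i)x^i at x = −1 equals (−1)^k times the product of the first k positive triangular numbers. -/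
open Finset

lemma cast_c2 (m : ℤ) : (c2 m : ℚ) = m * (m - 1) / 2 := by
  have h := Int.two_mul_ediv_two_of_even (Int.even_mul_pred_self m)
  rw [c2, eq_div_iff two_ne_zero, mul_comm]
  exact_mod_cast h

lemma gam_eq_zero_of_neg : ∀ {k : ℕ} {i : ℤ}, i < 0 → gam k i = 0
  | 0, i, hi => by simp [gam, hi.ne]
  | k + 1, i, hi => by
    simp [gam, gam_eq_zero_of_neg (k := k) (i := i - 1) (by omega),
      gam_eq_zero_of_neg (k := k) (i := i - 2) (by omega),
      gam_eq_zero_of_neg (k := k) (i := i - 3) (by omega)]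

lemma gam_eq_zero_of_three_mul_lt : ∀ {k : ℕ} {i : ℤ}, 3 * (k : ℤ) < i → gam k i = 0
  | 0, i, hi => by simp [gam, (show (0 : ℤ) < i by simpa using hi).ne']
  | k + 1, i, hi => by
    push_cast at hi
    simp [gam, gam_eq_zero_of_three_mul_lt (k := k) (i := i - 1) (by omega),
      gam_eq_zero_of_three_mul_lt (k := k) (i := i - 2) (by omega),
      gam_eq_zero_of_three_mul_lt (k := k) (i := i - 3) (by omega)]

lemma sum_range_mul_neg_one_pow_shift {R : Type*} [CommRing R] {g : ℤ → R} {d M N : ℕ}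
    (h_lt : ∀ i < (d : ℤ), g i = 0) (h_ge : ∀ i ≥ ((d + M : ℕ) : ℤ), g i = 0)
    (hN : d + M ≤ N) :
    ∑ i ∈ range N, g i * (-1) ^ i = (-1) ^ d * ∑ j ∈ range M, g (j + d) * (-1) ^ j := by
  rw [← sum_subset (range_subset_range.2 hN) fun i _ hi => by
      rw [h_ge i (by simp only [mem_range, not_lt] at hi; omega), zero_mul],
    sum_range_add, sum_eq_zero fun i hi => by rw [h_lt i (by simpa using hi), zero_mul],
    zero_add, mul_sum]
  refine sum_congr rfl fun j _ => ?_
  rw [pow_add, Nat.cast_add, add_comm (d : ℤ)]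
  ring

def gammaAtNegOne (k : ℕ) : ℚ := ∑ i ∈ range (3 * k + 1), (gam k i : ℚ) * (-1) ^ i

lemma sum_range_mul_gam_sub (k d : ℕ) (hd : d ≤ 3) (f : ℤ → ℚ) :
    ∑ i ∈ range (3 * (k + 1) + 1), f i * gam k (i - d) * (-1) ^ i =
      (-1) ^ d * ∑ j ∈ range (3 * k + 1), f (j + d) * gam k j * (-1) ^ j := by
  rw [sum_range_mul_neg_one_pow_shift (g := fun i => f i * gam k (i - d)) (d := d)
    (M := 3 * k + 1)
    (fun i hi => by simp [gam_eq_zero_of_neg (show i - d < 0 by omega)])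
    (fun i hi => by
      push_cast at hi
      simp [gam_eq_zero_of_three_mul_lt (show 3 * (k : ℤ) < i - d by omega)])
    (by omega)]
  simp only [add_sub_cancel_right]

lemma gammaAtNegOne_succ (k : ℕ) :
    gammaAtNegOne (k + 1) = -((k + 2) * (k + 1) / 2) * gammaAtNegOne k := by
  have split : gammaAtNegOne (k + 1) =
      ∑ i ∈ range (3 * (k + 1) + 1), (c2 (i - k - 1) : ℚ) * gam k (i - 1) * (-1) ^ i +
      ∑ i ∈ range (3 * (k + 1) + 1), (((i - 1) * (i - k - 2) : ℤ) : ℚ) * gam k (i - 2) * (-1) ^ i +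
      ∑ i ∈ range (3 * (k + 1) + 1), (c2 (i - 1) : ℚ) * gam k (i - 3) * (-1) ^ i := by
    rw [← sum_add_distrib, ← sum_add_distrib, gammaAtNegOne]
    refine sum_congr rfl fun i _ => ?_
    rw [gam]
    push_cast
    ring
  have shift1 := sum_range_mul_gam_sub k 1 (by norm_num) fun i => c2 (i - k - 1)
  have shift2 :=
    sum_range_mul_gam_sub k 2 (by norm_num) fun i => (((i - 1) * (i - k - 2) : ℤ) : ℚ)
  have shift3 := sum_range_mul_gam_sub k 3 (by norm_num) fun i => c2 (i - 1)
  simp only [Nat.cast_one, Nat.cast_ofNat] at shift1 shift2 shift3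
  rw [split, shift1, shift2, shift3,
    gammaAtNegOne, mul_sum, mul_sum, mul_sum, mul_sum, ← sum_add_distrib, ← sum_add_distrib]
  refine sum_congr rfl fun j _ => ?_
  simp only [cast_c2]
  push_cast
  ring

theorem gammaPoly_at_neg_one_general (k : ℕ) :
    (∑ i ∈ Finset.range (3 * k + 1), (gam k (i : ℤ) : ℚ) * (-1) ^ i) =
      (-1) ^ k * ((Nat.factorial (k + 1) : ℚ) * (Nat.factorial k : ℚ)) / 2 ^ k := by
  change gammaAtNegOne k = _
  induction k with
  | zero => simp [gammaAtNegOne, gam]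
  | succ k ih =>
    rw [gammaAtNegOne_succ, ih, Nat.factorial_succ (k + 1), Nat.factorial_succ k]
    push_cast
    field_simp
    ring

/-- The value of `γ_k(x) = Σ_i γ(k,i) xⁱ` at `x = −1` (the coefficients `γ(k,i)`
vanish for `i > 3k`, so the sum below captures all of them). -/
theorem gammaPoly_at_neg_one (k : ℕ) (hk : 1 ≤ k) :
    (∑ i ∈ Finset.range (3 * k + 1), (gam k (i : ℤ) : ℚ) * (-1) ^ i) =
      (-1) ^ k * ((Nat.factorial (k + 1) : ℚ) * (Nat.factorial k : ℚ)) / 2 ^ k :=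
  gammaPoly_at_neg_one_general k
end
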